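/- arXiv:1105.3713 — 6 statements merged into one kernel-verified Lean document; each statement's English description precedes it below -/
import Mathlib

section
/- The Motzkin numbers with weight ω=1 satisfy M_{n;1} = Σ_{k=0}^{n} C(n,k)·(−1)^{n−k}·C_{k+1}, where C_m denotes the m-th Catalan number. -/
open scoped BigOperators

/-- Weighted count of Motzkin-type paths from (0,0) to (n,j): steps (1,1),(1,-1),(1,0),
horizontal steps weighted ω, staying weakly above the x-axis. -/
def motzkinM (ω : ℚ) : ℕ → ℤ → ℚ
  | 0, j => if j = 0 then 1 else 0
  | n+1, j => if j < 0 then 0 else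
      motzkinM ω n (j-1) + ω * motzkinM ω n j + motzkinM ω n (j+1)

/-!
Let `T_ω f j = f (j - 1) + ω f j + f (j + 1)` for `j ≥ 0` (and `0` for `j < 0`), so that
`motzkinM ω n = T_ω ^ n δ₀`. Since `T_{ω + c} = T_ω + c` on functions supported on `j ≥ 0`, raising
the flat-step weight by `c` is a binomial transform, and `ω = 2`, `c = -1` reduces the claim to
`M_{k;2} = C_{k+1}`. A flat step of weight 2 is one of the two-step paths `ud`, `du`, so weight-2
Motzkin paths of length `k` ending at height `j` are Dyck prefixes of length `2k+1` ending at height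
`2j+1`, counted by the ballot numbers `binom(2k+1, k+j+1) - binom(2k+1, k+j+2)`.
-/

open Finset

theorem motzkinM_of_neg (ω : ℚ) (n : ℕ) {j : ℤ} (hj : j < 0) : motzkinM ω n j = 0 := by
  cases n <;> simp [motzkinM, hj, hj.ne]

theorem motzkinM_succ_of_nonneg (ω : ℚ) (n : ℕ) {j : ℤ} (hj : 0 ≤ j) :
    motzkinM ω (n + 1) j =
      motzkinM ω n (j - 1) + ω * motzkinM ω n j + motzkinM ω n (j + 1) := by
  simp [motzkinM, hj.not_gt]

theorem motzkinM_add_eq_sum (ω c : ℚ) (n : ℕ) (j : ℤ) :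
    motzkinM (ω + c) n j =
      ∑ k ∈ range (n + 1), (n.choose k : ℚ) * (c ^ (n - k) * motzkinM ω k j) := by
  induction n generalizing j with
  | zero => simp [motzkinM]
  | succ n ih =>
    rcases lt_or_ge j 0 with hj | hj
    · simp [motzkinM_of_neg _ _ hj]
    have step : ∀ i ∈ range (n + 1),
        (n.choose i : ℚ) * (c ^ (n + 1 - i) * motzkinM ω i j) +
            n.choose i * (c ^ (n - i) * motzkinM ω (i + 1) j) =
          n.choose i * (c ^ (n - i) * motzkinM ω i (j - 1)) +
            (ω + c) * (n.choose i * (c ^ (n - i) * motzkinM ω i j)) +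
            n.choose i * (c ^ (n - i) * motzkinM ω i (j + 1)) := by
      intro i hi
      rw [motzkinM_succ_of_nonneg _ _ hj, Nat.sub_add_comm (mem_range_succ_iff.mp hi)]
      ring
    rw [sum_choose_succ_mul (fun k l => c ^ l * motzkinM ω k j), ← sum_add_distrib,
      sum_congr rfl step, sum_add_distrib, sum_add_distrib, ← mul_sum,
      motzkinM_succ_of_nonneg _ _ hj, ih, ih, ih]

theorem Nat.choose_add_two_add_two (n m : ℕ) :
    (n + 2).choose (m + 2) = n.choose m + 2 * n.choose (m + 1) + n.choose (m + 2) := by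
  simp only [Nat.choose_succ_succ]; ring

theorem motzkinM_two_natCast (k j : ℕ) :
    motzkinM 2 k j = ((2 * k + 1).choose (k + j + 1) : ℚ) - (2 * k + 1).choose (k + j + 2) := by
  induction k generalizing j with
  | zero =>
    rcases j with _ | j <;> simp [motzkinM, Nat.choose_eq_zero_of_lt, Nat.cast_add_one_ne_zero]
  | succ k ih =>
    have ih_pred : ∀ i : ℕ, motzkinM 2 k ((i : ℤ) - 1) =
        ((2 * k + 1).choose (k + i) : ℚ) - (2 * k + 1).choose (k + i + 1) := by
      rintro (_ | i)
      · rw [motzkinM_of_neg _ _ (by norm_num), add_zero, Nat.choose_symm_half, sub_self]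
      · rw [Nat.cast_succ, add_sub_cancel_right, ih, ← add_assoc]
    have ih_succ := ih (j + 1)
    push_cast at ih_succ
    rw [motzkinM_succ_of_nonneg _ _ (Int.natCast_nonneg j), ih_pred, ih, ih_succ,
      show 2 * (k + 1) + 1 = 2 * k + 1 + 2 by ring, show k + 1 + j + 1 = k + j + 2 by ring,
      show k + 1 + j + 2 = k + j + 1 + 2 by ring, Nat.choose_add_two_add_two,
      Nat.choose_add_two_add_two]
    push_cast
    ring_nf

theorem catalan_succ_eq_choose_sub_choose (k : ℕ) :
    (catalan (k + 1) : ℚ) = (2 * k + 1).choose (k + 1) - (2 * k + 1).choose (k + 2) := by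
  have hcat : (k + 2) * catalan (k + 1) = 2 * (2 * k + 1).choose (k + 1) := by
    rw [succ_mul_catalan_eq_centralBinom, Nat.centralBinom_eq_two_mul_choose,
      show 2 * (k + 1) = 2 * k + 1 + 1 by ring, Nat.choose_succ_succ, Nat.choose_symm_half]
    ring
  have hchoose : (2 * k + 1).choose (k + 2) * (k + 2) = (2 * k + 1).choose (k + 1) * k := by
    rw [Nat.choose_succ_right_eq, show 2 * k + 1 - (k + 1) = k by omega]
  have hk : (k + 2 : ℚ) ≠ 0 := by positivity
  apply mul_left_cancel₀ hk
  have hcatQ : ((k + 2) * catalan (k + 1) : ℚ) = 2 * (2 * k + 1).choose (k + 1) := by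
    exact_mod_cast hcat
  have hchooseQ : ((2 * k + 1).choose (k + 2) * (k + 2) : ℚ) = (2 * k + 1).choose (k + 1) * k := by
    exact_mod_cast hchoose
  linear_combination hcatQ + hchooseQ

theorem motzkinM_two_zero (k : ℕ) : motzkinM 2 k 0 = catalan (k + 1) := by
  simpa [catalan_succ_eq_choose_sub_choose] using motzkinM_two_natCast k 0

theorem motzkin_eq_alternating_catalan (n : ℕ) :
    motzkinM 1 n 0 =
      ∑ k ∈ Finset.range (n+1), (n.choose k : ℚ) * (-1) ^ (n - k) * (catalan (k+1) : ℚ) := by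
  rw [show motzkinM 1 = motzkinM (2 + -1) by norm_num, motzkinM_add_eq_sum]
  refine sum_congr rfl fun k _ => ?_
  rw [motzkinM_two_zero, mul_assoc]
end

section
/- The inverse Motzkin matrix entries are given by Gegenbauer polynomial values: m_{i,j} = [t^{i−j}] (1+ωt+t²)^{−j−1} = Σ_{l=0}^{⌊(i−j)/2⌋} C(i−l, i−j−l)·C(i−j−l, l)·(−1)^l·(−ω)^{i−j−2l}. -/
/-!
Write `1 + ωt + t² = 1 - s` with `s = t(-ω - t)`. Substituting `s` into
`(1 - X)^{-(j+1)} = ∑ₖ C(j+k, j) Xᵏ` and expanding `sᵏ = tᵏ(-ω - t)ᵏ` binomially, the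
coefficient of `t^{i-j}` collects the terms with `k + l = i - j`, where `l` counts the factors
`-t`; the terms with `l > k` vanish.
-/

open Finset PowerSeries

/-- Inverse Motzkin matrix entries: m i j is the coefficient of t^i in
t^j * (1 + ω t + t^2)⁻¹ ^ (j+1). -/
noncomputable def minv (ω : ℚ) (i j : ℕ) : ℚ :=
  PowerSeries.coeff (R := ℚ) i ((PowerSeries.X : PowerSeries ℚ) ^ j *
    ((1 + PowerSeries.C (R := ℚ) ω * PowerSeries.X + PowerSeries.X ^ 2)⁻¹) ^ (j + 1))

namespace PowerSeries

variable {R K : Type*} [CommRing R] [Field K]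

theorem inv_one_sub_pow_eq_subst {s : K⟦X⟧} (hs : constantCoeff s = 0)
    (d : ℕ) : ((1 - s)⁻¹) ^ (d + 1) = (mk fun n => ((d + n).choose d : K)).subst s := by
  have hs' : HasSubst s := HasSubst.of_constantCoeff_zero' hs
  have h1 : constantCoeff (1 - s) ≠ 0 := by simp [hs]
  refine mul_right_cancel₀ (b := (1 - s) ^ (d + 1)) (pow_ne_zero _ fun h => by simp [h] at h1) ?_
  rw [← mul_pow, PowerSeries.inv_mul_cancel _ h1, one_pow]
  have hsubst := congrArg (subst s) (mk_add_choose_mul_one_sub_pow_eq_one K d)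
  rwa [subst_mul hs', subst_pow hs', subst_sub hs', subst_X hs', ← coe_substAlgHom hs', map_one,
    coe_substAlgHom, eq_comm] at hsubst

theorem coeff_subst_X_mul (f c : R⟦X⟧) (n : ℕ) :
    coeff n (f.subst (X * c)) = ∑ k ∈ range (n + 1), coeff k f * coeff (n - k) (c ^ k) := by
  have hXc : HasSubst (X * c) := HasSubst.of_constantCoeff_zero' (by simp)
  rw [coeff_subst' hXc, finsum_eq_sum_of_support_subset _ (s := range (n + 1))]
  · refine sum_congr rfl fun k hk => ?_
    rw [mul_pow, coeff_X_pow_mul', if_pos (by simpa [Nat.lt_succ_iff] using hk), smul_eq_mul]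
  · intro k hk
    by_contra hkn
    simp only [coe_range, Set.mem_Iio, not_lt] at hkn
    rw [Function.mem_support, mul_pow, coeff_X_pow_mul', if_neg (by omega), smul_zero] at hk
    exact hk rfl

theorem coeff_C_add_C_mul_X_pow (a b : R) (k m : ℕ) :
    coeff m ((C a + C b * X) ^ k) = k.choose m * a ^ (k - m) * b ^ m := by
  rw [add_comm, add_pow, map_sum]
  have hterm : ∀ l ∈ range (k + 1), coeff m ((C b * X) ^ l * C a ^ (k - l) * (k.choose l : R⟦X⟧))
      = if m = l then (k.choose l : R) * a ^ (k - l) * b ^ l else 0 := by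
    intro l _
    rw [show (C b * X) ^ l * C a ^ (k - l) * (k.choose l : R⟦X⟧)
        = C ((k.choose l : R) * a ^ (k - l) * b ^ l) * X ^ l by
          simp only [map_mul, map_pow, map_natCast]; ring,
      coeff_C_mul_X_pow]
  rw [sum_congr rfl hterm, sum_ite_eq]
  split_ifs with hm
  · rfl
  · rw [Nat.choose_eq_zero_of_lt (by simpa using hm)]; simp

theorem coeff_inv_one_sub_X_mul_pow (a b : K) (d n : ℕ) :
    coeff n (((1 - X * (C a + C b * X))⁻¹) ^ (d + 1)) =
      ∑ l ∈ range (n / 2 + 1),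
        ((d + (n - l)).choose d : K) * (n - l).choose l * a ^ (n - 2 * l) * b ^ l := by
  rw [inv_one_sub_pow_eq_subst (by simp), coeff_subst_X_mul, ← sum_range_reflect]
  simp only [coeff_mk, coeff_C_add_C_mul_X_pow]
  symm
  rw [sum_subset (range_subset_range.mpr (by omega : n / 2 + 1 ≤ n + 1))]
  · refine sum_congr rfl fun l hl => ?_
    have hln : l ≤ n := Nat.lt_succ_iff.mp (mem_range.mp hl)
    rw [Nat.add_sub_cancel, Nat.sub_sub_self hln, show n - l - l = n - 2 * l by omega]
    ring
  · intro l hl hl'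
    have hlarge : n - l < l := by simp only [mem_range] at hl hl'; omega
    rw [Nat.choose_eq_zero_of_lt hlarge, Nat.cast_zero, mul_zero, zero_mul, zero_mul]

end PowerSeries

theorem minv_gegenbauer (ω : ℚ) (i j : ℕ) (h : j ≤ i) :
    minv ω i j =
      ∑ l ∈ Finset.range ((i - j)/2 + 1),
        ((i - l).choose (i - j - l) : ℚ) * ((i - j - l).choose l : ℚ) *
          (-1) ^ l * (-ω) ^ (i - j - 2*l) := by
  obtain ⟨n, rfl⟩ := Nat.exists_eq_add_of_le h
  have hquad : 1 + C ω * X + X ^ 2 = 1 - X * (C (-ω) + C (-1) * X) := by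
    simp only [map_neg, map_one]; ring
  rw [minv, coeff_X_pow_mul', if_pos (by omega), hquad, coeff_inv_one_sub_X_mul_pow,
    Nat.add_sub_cancel_left]
  refine sum_congr rfl fun l hl => ?_
  have hln : l ≤ n := by simp only [mem_range] at hl; omega
  rw [Nat.add_sub_assoc hln, ← Nat.choose_symm_add]
  ring
end

section
/- The inverse Motzkin polynomial satisfies Σ_{j=0}^{k} m_{k,j} t^{k−j} = Σ_{l=0}^{⌊k/2⌋} C(k−l, l)·(−1)^l·t^{2l}·(1−ωt)^{k−2l}. -/
open scoped BigOperators

/-!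
Both sides satisfy `P (k + 2) = (1 - ω t) P (k + 1) - t² P k` with `P 0 = 1` and
`P 1 = 1 - ω t`, so both are the Dickson polynomial of the second kind `E_k(x, a)` evaluated
at `x = 1 - ω t`, `a = t²`. On the left the recurrence is the identity
`g * g⁻¹ ^ (j + 1) = g⁻¹ ^ j` for `g = 1 + ω t + t²`, read off coefficientwise; on the right it is
Pascal's rule.
-/

theorem Nat.choose_succ_sub_succ (n l : ℕ) :
    (n + 1 - l).choose (l + 1) = (n - l).choose l + (n - l).choose (l + 1) := by
  rcases le_or_gt l n with h | h
  · rw [show n + 1 - l = n - l + 1 by omega, Nat.choose_succ_succ]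
  · rw [Nat.choose_eq_zero_of_lt (by omega), Nat.choose_eq_zero_of_lt (by omega),
      Nat.choose_eq_zero_of_lt (by omega)]

namespace PowerSeries

theorem coeff_add_two_quadratic_mul {R : Type*} [Semiring R] (ω : R) (h : R⟦X⟧) (n : ℕ) :
    coeff (n + 2) ((1 + C ω * X + X ^ 2) * h) =
      coeff (n + 2) h + ω * coeff (n + 1) h + coeff n h := by
  simp [add_mul, mul_assoc, coeff_X_pow_mul', coeff_succ_X_mul]

theorem coeff_one_quadratic_mul {R : Type*} [Semiring R] (ω : R) (h : R⟦X⟧) :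
    coeff 1 ((1 + C ω * X + X ^ 2) * h) = coeff 1 h + ω * coeff 0 h := by
  simp [add_mul, mul_assoc, coeff_X_pow_mul', coeff_succ_X_mul]

section Field

variable {K : Type*} [Field K] (ω : K)

theorem coeff_zero_quadratic_inv_pow (j : ℕ) :
    coeff 0 ((1 + C ω * X + X ^ 2 : K⟦X⟧)⁻¹ ^ j) = 1 := by
  simp [constantCoeff_inv]

theorem quadratic_mul_inv_pow_succ (j : ℕ) :
    (1 + C ω * X + X ^ 2 : K⟦X⟧) * (1 + C ω * X + X ^ 2)⁻¹ ^ (j + 1) =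
      (1 + C ω * X + X ^ 2)⁻¹ ^ j := by
  rw [pow_succ' _ j, ← mul_assoc, PowerSeries.mul_inv_cancel _ (by simp), one_mul]

theorem coeff_one_quadratic_inv_pow (j : ℕ) :
    coeff 1 ((1 + C ω * X + X ^ 2 : K⟦X⟧)⁻¹ ^ j) = -(j * ω) := by
  induction j with
  | zero => simp [coeff_one]
  | succ j ih =>
    rw [← quadratic_mul_inv_pow_succ, coeff_one_quadratic_mul, coeff_zero_quadratic_inv_pow] at ih
    push_cast
    linear_combination ih

theorem coeff_add_two_quadratic_inv_pow (n j : ℕ) :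
    coeff (n + 2) ((1 + C ω * X + X ^ 2 : K⟦X⟧)⁻¹ ^ j) =
      coeff (n + 2) ((1 + C ω * X + X ^ 2 : K⟦X⟧)⁻¹ ^ (j + 1)) +
        ω * coeff (n + 1) ((1 + C ω * X + X ^ 2 : K⟦X⟧)⁻¹ ^ (j + 1)) +
          coeff n ((1 + C ω * X + X ^ 2 : K⟦X⟧)⁻¹ ^ (j + 1)) := by
  rw [← coeff_add_two_quadratic_mul, quadratic_mul_inv_pow_succ]

end Field

end PowerSeries

namespace Polynomial

variable {R : Type*} [CommRing R]

theorem dickson_two_term_add_two (a : R) (n l : ℕ) :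
    C (((n + 2 - (l + 1)).choose (l + 1) : R) * (-a) ^ (l + 1)) * X ^ (n + 2 - 2 * (l + 1)) =
      X * (C (((n + 1 - (l + 1)).choose (l + 1) : R) * (-a) ^ (l + 1)) *
          X ^ (n + 1 - 2 * (l + 1))) -
        C a * (C (((n - l).choose l : R) * (-a) ^ l) * X ^ (n - 2 * l)) := by
  rw [show n + 2 - (l + 1) = n + 1 - l by omega, Nat.choose_succ_sub_succ,
    show n + 1 - (l + 1) = n - l by omega, show n + 2 - 2 * (l + 1) = n - 2 * l by omega]
  rcases Nat.lt_or_ge n (2 * l + 1) with h | h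
  · rw [Nat.choose_eq_zero_of_lt (show n - l < l + 1 by omega)]
    simp only [Nat.cast_zero, add_zero, map_mul, map_pow, map_neg, map_natCast, map_zero,
      zero_mul, mul_zero]
    ring
  · rw [show n - 2 * l = n + 1 - 2 * (l + 1) + 1 by omega]
    simp only [Nat.cast_add, map_add, map_mul, map_pow, map_neg, map_natCast]
    ring

theorem dickson_two_eq_sum_range (a : R) {n N : ℕ} (hN : n / 2 < N) :
    dickson 2 a n =
      ∑ l ∈ Finset.range N, C (((n - l).choose l : R) * (-a) ^ l) * X ^ (n - 2 * l) := by
  obtain ⟨M, rfl⟩ : ∃ M, N = M + 1 := ⟨N - 1, by omega⟩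
  induction n using Nat.twoStepInduction generalizing M with
  | zero =>
    rw [Finset.sum_range_succ']
    norm_num
  | one =>
    rw [Finset.sum_range_succ']
    simp
  | more n ih₀ ih₁ =>
    obtain ⟨M, rfl⟩ : ∃ M', M = M' + 1 := ⟨M - 1, by omega⟩
    rw [dickson_add_two, ih₁ (M := M + 1) (by omega), ih₀ (M := M) (by omega),
      Finset.sum_range_succ' _ (M + 1), Finset.sum_range_succ' _ (M + 1), mul_add,
      Finset.mul_sum, Finset.mul_sum]
    simp only [dickson_two_term_add_two, Finset.sum_sub_distrib, Nat.sub_zero, mul_zero,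
      Nat.choose_zero_right, Nat.cast_one, pow_zero, mul_one, map_one, one_mul]
    ring

theorem dickson_two_eq_sum (a : R) (n : ℕ) :
    dickson 2 a n =
      ∑ l ∈ Finset.range (n / 2 + 1), C (((n - l).choose l : R) * (-a) ^ l) * X ^ (n - 2 * l) :=
  dickson_two_eq_sum_range a (Nat.lt_succ_self _)

end Polynomial

open Polynomial

noncomputable def minvPoly (ω : ℚ) (k : ℕ) : ℚ[X] :=
  ∑ j ∈ Finset.range (k + 1), C (minv ω k j) * X ^ (k - j)

/-- For `m > k` the exponent truncates to `0` and both sides vanish. -/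
theorem coeff_minvPoly (ω : ℚ) (k m : ℕ) :
    (minvPoly ω k).coeff m = PowerSeries.coeff m
      ((1 + PowerSeries.C ω * PowerSeries.X + PowerSeries.X ^ 2)⁻¹ ^ (k + 1 - m)) := by
  simp only [minvPoly, finsetSum_coeff, coeff_C_mul_X_pow]
  rcases le_or_gt m k with hm | hm
  · rw [Finset.sum_eq_single (k - m)]
    · rw [if_pos (by omega), minv, PowerSeries.coeff_X_pow_mul', if_pos (by omega),
        show k - (k - m) = m by omega, show k - m + 1 = k + 1 - m by omega]
    · intro j hj hne
      rw [Finset.mem_range] at hj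
      exact if_neg (by omega)
    · intro h
      simp at h
  · rw [Finset.sum_eq_zero (fun j hj => if_neg (by simp at hj; omega)),
      show k + 1 - m = 0 by omega, pow_zero, PowerSeries.coeff_one, if_neg (by omega)]

theorem minvPoly_add_two (ω : ℚ) (k : ℕ) :
    minvPoly ω (k + 2) = (1 - C ω * X) * minvPoly ω (k + 1) - X ^ 2 * minvPoly ω k := by
  ext m
  rw [coeff_sub, sub_mul, one_mul, coeff_sub, mul_assoc, coeff_C_mul, coeff_X_pow_mul']
  match m with
  | 0 => simp [coeff_minvPoly, PowerSeries.coeff_zero_quadratic_inv_pow]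
  | 1 =>
    rw [if_neg (by omega), coeff_X_mul]
    simp only [coeff_minvPoly, PowerSeries.coeff_one_quadratic_inv_pow,
      PowerSeries.coeff_zero_quadratic_inv_pow, show k + 2 + 1 - 1 = k + 2 by omega,
      show k + 1 + 1 - 1 = k + 1 by omega]
    push_cast
    ring
  | n + 2 =>
    rw [if_pos (by omega), coeff_X_mul]
    simp only [coeff_minvPoly, Nat.add_sub_cancel]
    rcases le_or_gt n k with h | h
    · rw [show k + 2 + 1 - (n + 2) = k - n + 1 by omega, show k + 1 + 1 - (n + 2) = k - n by omega,
        show k + 1 + 1 - (n + 1) = k - n + 1 by omega, show k + 1 - n = k - n + 1 by omega,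
        PowerSeries.coeff_add_two_quadratic_inv_pow ω n (k - n)]
      ring
    · rw [show k + 2 + 1 - (n + 2) = 0 by omega, show k + 1 + 1 - (n + 2) = 0 by omega,
        show k + 1 + 1 - (n + 1) = 0 by omega, show k + 1 - n = 0 by omega]
      simp only [pow_zero, PowerSeries.coeff_one, if_neg (show n ≠ 0 by omega),
        if_neg (show n + 1 ≠ 0 by omega), if_neg (show n + 2 ≠ 0 by omega)]
      ring

theorem minvPoly_eq_eval_dickson (ω : ℚ) (k : ℕ) :
    minvPoly ω k = (dickson 2 (X ^ 2 : ℚ[X]) k).eval (1 - C ω * X) := by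
  induction k using Nat.twoStepInduction with
  | zero =>
    ext m
    rcases m with _ | _ | n <;> norm_num [coeff_minvPoly, coeff_one]
  | one =>
    ext m
    match m with
    | 0 => simp [coeff_minvPoly, PowerSeries.coeff_zero_quadratic_inv_pow]
    | 1 => simpa [coeff_minvPoly, coeff_one] using PowerSeries.coeff_one_quadratic_inv_pow ω 1
    | n + 2 => simp [coeff_minvPoly, coeff_one, PowerSeries.coeff_one]
  | more n ih₀ ih₁ =>
    rw [minvPoly_add_two, ih₀, ih₁, dickson_add_two]
    simp

theorem minv_polynomial (ω : ℚ) (k : ℕ) :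
    ∑ j ∈ Finset.range (k+1), Polynomial.C (minv ω k j) * Polynomial.X ^ (k - j) =
      ∑ l ∈ Finset.range (k/2 + 1),
        Polynomial.C (((k - l).choose l : ℚ) * (-1) ^ l) * Polynomial.X ^ (2*l) *
          (1 - Polynomial.C ω * Polynomial.X) ^ (k - 2*l) := by
  rw [← minvPoly, minvPoly_eq_eval_dickson, dickson_two_eq_sum, eval_finsetSum]
  refine Finset.sum_congr rfl fun l _ => ?_
  simp only [eval_mul, eval_neg, eval_C, eval_pow, eval_X, map_mul, map_pow, map_neg, map_one,
    map_natCast, eval_natCast]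
  ring
end

section
/- For 0 ≤ i ≤ j, Σ_{k=0}^{j} m_{j,k}·M_{i+k;ω} = δ_{i,j}. In particular this orthogonality involves Motzkin numbers with indices exceeding j. -/
open scoped BigOperators

/-!
Write `q = 1 + ωt + t²`, so that `m_{j,k} = [t^j] t^k q^{-(k+1)}`. Multiplying by `q` gives
the three-term recurrence `m_{j+2} = x·m_{j+1} - ω m_{j+1} - m_j` for the row polynomials
`Σ_k m_{j,k} x^k`, while the Motzkin triangle `M_{n,l}` satisfies
`M_{n+1,l} = M_{n,l-1} + ω M_{n,l} + M_{n,l+1}`; together they show that `(m_{j,k})` is the inverse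
of the triangle `(M_{k,l})`. The tridiagonal step is symmetric, so cutting a path of length `i + k`
at time `i` gives `M_{i+k,0} = Σ_l M_{i,l} M_{k,l}`. Hence
`Σ_k m_{j,k} M_{i+k,0} = Σ_l M_{i,l} Σ_k m_{j,k} M_{k,l} = M_{i,j}`, which is `δ_{i,j}` for `i ≤ j`.
-/

open PowerSeries Finset

theorem sum_range_shift_mul {R : Type*} [Semiring R] (f g : ℤ → R) (n : ℕ) (h₀ : f (-1) = 0)
    (hn : f n = 0) :
    ∑ l ∈ range (n + 1), f (l - 1) * g l = ∑ l ∈ range (n + 1), f l * g (l + 1) := by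
  rw [sum_range_succ', sum_range_succ]
  push_cast
  simp only [h₀, hn, add_sub_cancel_right, zero_mul, add_zero]

section InverseMotzkinMatrix

variable (ω : ℚ)

noncomputable def motzkinStep : ℚ⟦X⟧ := 1 + C ω * X + X ^ 2

theorem motzkinStep_inv_mul : (motzkinStep ω)⁻¹ * motzkinStep ω = 1 :=
  PowerSeries.inv_mul_cancel _ (by simp [motzkinStep])

theorem constantCoeff_motzkinStep_inv : constantCoeff (motzkinStep ω)⁻¹ = 1 := by
  simp [motzkinStep]

theorem coeff_succ_succ_mul_motzkinStep (f : ℚ⟦X⟧) (n : ℕ) :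
    coeff (n + 2) (f * motzkinStep ω) = coeff (n + 2) f + ω * coeff (n + 1) f + coeff n f := by
  have hf : f * motzkinStep ω = f + C ω * f * X + f * X ^ 2 := by
    simp only [motzkinStep]; ring
  rw [hf, map_add, map_add, coeff_succ_mul_X, coeff_C_mul, coeff_mul_X_pow]

theorem minv_eq_coeff (j k : ℕ) : minv ω j k = coeff j (X ^ k * (motzkinStep ω)⁻¹ ^ (k + 1)) :=
  rfl

variable {ω} in
theorem minv_of_lt {j k : ℕ} (h : j < k) : minv ω j k = 0 := by
  rw [minv_eq_coeff, coeff_X_pow_mul', if_neg (by omega)]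

theorem minv_self (j : ℕ) : minv ω j j = 1 := by
  rw [minv_eq_coeff, coeff_X_pow_mul', if_pos le_rfl, Nat.sub_self, coeff_zero_eq_constantCoeff,
    map_pow, constantCoeff_motzkinStep_inv, one_pow]

theorem minv_one_zero : minv ω 1 0 = -ω := by
  have h : coeff 1 ((motzkinStep ω)⁻¹ * motzkinStep ω) = 0 := by
    rw [motzkinStep_inv_mul, coeff_one, if_neg one_ne_zero]
  have hf : (motzkinStep ω)⁻¹ * motzkinStep ω =
      (motzkinStep ω)⁻¹ + C ω * (motzkinStep ω)⁻¹ * X + X * X * (motzkinStep ω)⁻¹ := by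
    simp only [motzkinStep]; ring
  rw [hf, map_add, map_add, coeff_succ_mul_X, coeff_C_mul, coeff_zero_eq_constantCoeff,
    constantCoeff_motzkinStep_inv, mul_assoc, coeff_succ_X_mul, coeff_zero_X_mul] at h
  rw [minv_eq_coeff]
  simp only [pow_zero, one_mul, zero_add, pow_one]
  linarith

theorem minv_succ_succ_zero (j : ℕ) :
    minv ω (j + 2) 0 = -ω * minv ω (j + 1) 0 - minv ω j 0 := by
  have h := coeff_succ_succ_mul_motzkinStep ω (motzkinStep ω)⁻¹ j
  rw [motzkinStep_inv_mul, coeff_one, if_neg (by omega)] at h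
  simp only [minv_eq_coeff, pow_zero, one_mul, zero_add, pow_one]
  linarith

theorem minv_succ_succ_succ (j k : ℕ) :
    minv ω (j + 2) (k + 1) = minv ω (j + 1) k - ω * minv ω (j + 1) (k + 1) - minv ω j (k + 1) := by
  have h := coeff_succ_succ_mul_motzkinStep ω (X ^ (k + 1) * (motzkinStep ω)⁻¹ ^ (k + 2)) j
  have hshift : X ^ (k + 1) * (motzkinStep ω)⁻¹ ^ (k + 2) * motzkinStep ω =
      X ^ k * (motzkinStep ω)⁻¹ ^ (k + 1) * X := by
    calc _ = X ^ k * (motzkinStep ω)⁻¹ ^ (k + 1) * X * ((motzkinStep ω)⁻¹ * motzkinStep ω) := by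
            ring
      _ = _ := by rw [motzkinStep_inv_mul, mul_one]
  rw [hshift, coeff_succ_mul_X] at h
  simp only [minv_eq_coeff]
  linarith

theorem sum_range_minv_succ_succ_mul (g : ℕ → ℚ) (j n : ℕ) :
    ∑ k ∈ range (n + 1), minv ω (j + 2) k * g k =
      ∑ k ∈ range n, minv ω (j + 1) k * g (k + 1)
        - ω * ∑ k ∈ range (n + 1), minv ω (j + 1) k * g k
        - ∑ k ∈ range (n + 1), minv ω j k * g k := by
  simp only [sum_range_succ' _ n, minv_succ_succ_zero, minv_succ_succ_succ, sub_mul, mul_add,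
    sum_sub_distrib, mul_sum]
  ring_nf

theorem sum_range_minv_mul_eq_of_lt (g : ℕ → ℚ) {j N : ℕ} (hN : j < N) :
    ∑ k ∈ range N, minv ω j k * g k = ∑ k ∈ range (j + 1), minv ω j k * g k := by
  refine (sum_subset (range_subset_range.2 hN) fun k hk hk' => ?_).symm
  rw [minv_of_lt (by simp_all), zero_mul]

end InverseMotzkinMatrix

section MotzkinTriangle

variable (ω : ℚ)

theorem motzkinM_of_neg_s11 {l : ℤ} (hl : l < 0) : ∀ n, motzkinM ω n l = 0
  | 0 => if_neg hl.ne
  | _ + 1 => if_pos hl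

theorem motzkinM_succ (n : ℕ) {l : ℤ} (hl : 0 ≤ l) :
    motzkinM ω (n + 1) l = motzkinM ω n (l - 1) + ω * motzkinM ω n l + motzkinM ω n (l + 1) :=
  if_neg hl.not_gt

theorem motzkinM_of_lt : ∀ {n : ℕ} {l : ℤ}, n < l → motzkinM ω n l = 0
  | 0, _, h => if_neg (by omega)
  | n + 1, l, h => by
    rw [motzkinM_succ ω n (by omega), motzkinM_of_lt (by omega), motzkinM_of_lt (by omega),
      motzkinM_of_lt (by omega)]
    ring

theorem motzkinM_self : ∀ n : ℕ, motzkinM ω n n = 1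
  | 0 => if_pos rfl
  | n + 1 => by
    rw [Nat.cast_succ, motzkinM_succ ω n (by omega), add_sub_cancel_right, motzkinM_self n,
      motzkinM_of_lt ω (by omega), motzkinM_of_lt ω (by omega)]
    ring

end MotzkinTriangle

theorem sum_range_minv_mul_motzkinM (ω : ℚ) (j N : ℕ) (hN : j < N) (l : ℤ) :
    ∑ k ∈ range N, minv ω j k * motzkinM ω k l = if l = j then 1 else 0 := by
  induction j using Nat.twoStepInduction generalizing N l with
  | zero =>
    rw [sum_range_minv_mul_eq_of_lt ω _ hN, sum_range_one, minv_self, one_mul]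
    rfl
  | one =>
    rw [sum_range_minv_mul_eq_of_lt ω _ hN, sum_range_succ, sum_range_one, minv_one_zero,
      minv_self]
    rcases lt_or_ge l 0 with hl | hl
    · rw [motzkinM_of_neg_s11 ω hl, motzkinM_of_neg_s11 ω hl, if_neg (by omega)]
      ring
    · rw [motzkinM_succ ω 0 hl]
      simp only [motzkinM]
      split_ifs <;> first | omega | ring
  | more j ih₀ ih₁ =>
    obtain ⟨n, rfl⟩ : ∃ n, N = n + 1 := ⟨N - 1, by omega⟩
    rcases lt_or_ge l 0 with hl | hl
    · simp only [motzkinM_of_neg_s11 ω hl, mul_zero, sum_const_zero]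
      exact (if_neg (by omega)).symm
    have hrow : ∑ k ∈ range n, minv ω (j + 1) k * motzkinM ω (k + 1) l =
        ∑ k ∈ range n, minv ω (j + 1) k * motzkinM ω k (l - 1)
          + ω * ∑ k ∈ range n, minv ω (j + 1) k * motzkinM ω k l
          + ∑ k ∈ range n, minv ω (j + 1) k * motzkinM ω k (l + 1) := by
      simp only [motzkinM_succ ω _ hl, mul_sum, ← sum_add_distrib]
      exact sum_congr rfl fun k _ => by ring
    rw [sum_range_minv_succ_succ_mul, hrow, ih₁ n (by omega), ih₁ n (by omega), ih₁ n (by omega),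
      ih₁ (n + 1) (by omega), ih₀ (n + 1) (by omega)]
    push_cast
    split_ifs <;> first | omega | ring

theorem sum_range_motzkinM_succ_mul (ω : ℚ) (i k N : ℕ) (hi : i + 2 ≤ N) (hk : k + 2 ≤ N) :
    ∑ l ∈ range N, motzkinM ω (i + 1) l * motzkinM ω k l =
      ∑ l ∈ range N, motzkinM ω i l * motzkinM ω (k + 1) l := by
  obtain ⟨n, rfl⟩ : ∃ n, N = n + 1 := ⟨N - 1, by omega⟩
  have hshift (a b : ℕ) (ha : a + 2 ≤ n + 1) :=
    sum_range_shift_mul (motzkinM ω a) (motzkinM ω b) n (motzkinM_of_neg_s11 ω (by norm_num) a)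
      (motzkinM_of_lt ω (by omega))
  have hshift' : ∑ l ∈ range (n + 1), motzkinM ω i l * motzkinM ω k ((l : ℤ) - 1) =
      ∑ l ∈ range (n + 1), motzkinM ω i ((l : ℤ) + 1) * motzkinM ω k l := by
    simpa only [mul_comm] using hshift k i hk
  simp only [motzkinM_succ ω _ (Nat.cast_nonneg _), add_mul, mul_add, sum_add_distrib]
  rw [hshift i k hi, hshift']
  simp only [mul_left_comm ω, mul_assoc]
  ring

theorem motzkinM_add_zero_eq_sum_mul (ω : ℚ) (i k N : ℕ) (hN : i + k + 2 ≤ N) :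
    motzkinM ω (i + k) 0 = ∑ l ∈ range N, motzkinM ω i l * motzkinM ω k l := by
  induction i generalizing k with
  | zero =>
    rw [sum_eq_single_of_mem 0 (mem_range.2 (by omega)) fun l _ hl => ?_]
    · simp [motzkinM]
    · rw [motzkinM_of_lt ω (by omega), zero_mul]
  | succ i ih =>
    rw [show i + 1 + k = i + (k + 1) by omega, ih (k + 1) (by omega),
      sum_range_motzkinM_succ_mul ω i k N (by omega) (by omega)]

theorem minv_motzkin_orthogonality (ω : ℚ) (i j : ℕ) (h : i ≤ j) :
    ∑ k ∈ Finset.range (j+1), minv ω j k * motzkinM ω (i+k) 0 =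
      if i = j then (1 : ℚ) else 0 := by
  calc ∑ k ∈ range (j + 1), minv ω j k * motzkinM ω (i + k) 0
      = ∑ k ∈ range (j + 1), ∑ l ∈ range (i + j + 2),
          motzkinM ω i l * (minv ω j k * motzkinM ω k l) := by
        refine sum_congr rfl fun k hk => ?_
        have hk : k < j + 1 := mem_range.1 hk
        rw [motzkinM_add_zero_eq_sum_mul ω i k (i + j + 2) (by omega), mul_sum]
        exact sum_congr rfl fun l _ => by ring
    _ = ∑ l ∈ range (i + j + 2), motzkinM ω i l * if (l : ℤ) = j then 1 else 0 := by
        rw [sum_comm]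
        refine sum_congr rfl fun l _ => ?_
        rw [← mul_sum, sum_range_minv_mul_motzkinM ω j (j + 1) (by omega)]
    _ = motzkinM ω i j := by
        simp only [Nat.cast_inj, mul_ite, mul_one, mul_zero, sum_ite_eq', mem_range]
        exact if_pos (by omega)
    _ = if i = j then 1 else 0 := by
        rcases h.eq_or_lt with rfl | hlt
        · rw [motzkinM_self, if_pos rfl]
        · rw [motzkinM_of_lt ω (by exact_mod_cast hlt), if_neg hlt.ne]
end

section
/- For α, β and weight ω, det(α·M_{i+j;ω} + β·M_{i+j+1;ω})_{0≤i,j≤n−1} = Σ_{k=0}^{⌊n/2⌋} C(n−k,k)·(−1)^k·β^{2k}·(α+βω)^{n−2k}. -/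
/-!
Let `L = (M_{i,k;ω})_{i,k<n}`, the counts of weighted Motzkin paths of length `i` ending at
height `k`; it is lower unitriangular. Cutting a path to height `0` of length `i + j` at time `i`
gives `M_{i+j,0} = ∑_k M_{i,k} M_{j,k}`, and one more step is the symmetric tridiagonal transfer
matrix `T` (`ω` on the diagonal, `1` beside it). Hence the shifted Hankel matrix is
`L (α + β T) Lᵀ`, and its determinant is that of the tridiagonal Toeplitz matrix with diagonal
`α + β ω` and off-diagonal `β`. Expanding along the first row, these determinants satisfy
`D (n + 2) = (α + β ω) D (n + 1) - β² D n`, the recurrence of the bivariate Fibonacci polynomials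
`∑_k C(n-k,k) y^k x^(n-2k)` at `x = α + β ω`, `y = -β²`.
-/

open scoped BigOperators

open Finset Matrix

theorem sum_range_succ_shift {M : Type*} [AddCommMonoid M] (φ : ℤ → ℤ → M) (N : ℕ)
    (h₀ : φ (-1) 0 = 0) (hN : φ N (N + 1) = 0) :
    ∑ k ∈ range (N + 1), φ (k - 1) k = ∑ k ∈ range (N + 1), φ k (k + 1) := by
  rw [sum_range_succ', sum_range_succ]
  push_cast
  simp [h₀, hN]

namespace motzkinM

variable (ω : ℚ)

theorem of_neg (n : ℕ) {j : ℤ} (hj : j < 0) : motzkinM ω n j = 0 := by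
  cases n with
  | zero => simp [motzkinM, hj.ne]
  | succ n => simp [motzkinM, hj]

theorem succ_of_nonneg (n : ℕ) {j : ℤ} (hj : 0 ≤ j) :
    motzkinM ω (n + 1) j = motzkinM ω n (j - 1) + ω * motzkinM ω n j + motzkinM ω n (j + 1) := by
  simp [motzkinM, hj.not_gt]

theorem of_lt {n : ℕ} {j : ℤ} (hj : n < j) : motzkinM ω n j = 0 := by
  induction n generalizing j with
  | zero => simp [motzkinM]; omega
  | succ n ih =>
    rw [succ_of_nonneg ω n (by omega), ih (by omega), ih (by omega), ih (by omega)]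
    ring

theorem self (n : ℕ) : motzkinM ω n n = 1 := by
  induction n with
  | zero => simp [motzkinM]
  | succ n ih =>
    rw [succ_of_nonneg ω n (by positivity)]
    push_cast
    rw [add_sub_cancel_right, ih, of_lt ω (by omega), of_lt ω (by omega)]
    ring

/-- The one-step transfer operator is symmetric: an up-step of one factor pairs with a down-step
of the other. -/
theorem sum_succ_mul_eq_sum_mul_succ (n p : ℕ) {N : ℕ} (hn : n ≤ N) (hp : p ≤ N) :
    ∑ k ∈ range (N + 1), motzkinM ω (n + 1) k * motzkinM ω p k =
      ∑ k ∈ range (N + 1), motzkinM ω n k * motzkinM ω (p + 1) k := by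
  have expand : ∀ q r : ℕ, ∑ k ∈ range (N + 1), motzkinM ω (q + 1) k * motzkinM ω r k =
      ∑ k ∈ range (N + 1), motzkinM ω q (k - 1) * motzkinM ω r k +
        ω * ∑ k ∈ range (N + 1), motzkinM ω q k * motzkinM ω r k +
        ∑ k ∈ range (N + 1), motzkinM ω q (k + 1) * motzkinM ω r k := by
    intro q r
    simp only [succ_of_nonneg ω q (Int.natCast_nonneg _), add_mul, sum_add_distrib, mul_sum,
      mul_assoc]
  have shift : ∀ q r : ℕ, q ≤ N →
      ∑ k ∈ range (N + 1), motzkinM ω r (k - 1) * motzkinM ω q k =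
        ∑ k ∈ range (N + 1), motzkinM ω q (k + 1) * motzkinM ω r k := by
    intro q r hq
    rw [sum_range_succ_shift (fun i j => motzkinM ω r i * motzkinM ω q j) N
      (by simp [of_neg]) (by simp [of_lt ω (show (q : ℤ) < N + 1 by omega)])]
    simp only [mul_comm]
  simp_rw [mul_comm (motzkinM ω n _) (motzkinM ω (p + 1) _)]
  rw [expand, expand, shift p n hp, ← shift n p hn]
  simp only [mul_comm]
  ring

theorem add_zero_eq_sum_range_succ (n p : ℕ) {N : ℕ} (hN : n + p ≤ N) :
    motzkinM ω (n + p) 0 = ∑ k ∈ range (N + 1), motzkinM ω n k * motzkinM ω p k := by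
  induction p generalizing n with
  | zero =>
    rw [sum_eq_single 0 (fun k _ hk => by simp [motzkinM, hk]) (by simp)]
    simp [motzkinM]
  | succ p ih =>
    rw [← add_assoc, add_right_comm, ih (n + 1) (by omega),
      sum_succ_mul_eq_sum_mul_succ ω n p (by omega) (by omega)]

theorem sum_range_mul_eq_of_lt {n N : ℕ} (hn : n < N) (g : ℕ → ℚ) :
    ∑ k ∈ range N, motzkinM ω n k * g k = ∑ k ∈ range (n + 1), motzkinM ω n k * g k := by
  refine (sum_subset (range_subset_range.2 hn) fun k _ hk => ?_).symm
  rw [of_lt ω (by simp at hk; omega), zero_mul]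

theorem add_zero_eq_sum_range (n p : ℕ) {N : ℕ} (hn : n < N) :
    motzkinM ω (n + p) 0 = ∑ k ∈ range N, motzkinM ω n k * motzkinM ω p k := by
  rw [add_zero_eq_sum_range_succ ω n p le_rfl, sum_range_mul_eq_of_lt ω (by omega),
    sum_range_mul_eq_of_lt ω hn]

end motzkinM

section FibPoly

variable {R : Type*} [CommSemiring R] (x y : R)

def fibPoly (n : ℕ) : R :=
  ∑ p ∈ antidiagonal n, (p.1.choose p.2 : R) * y ^ p.2 * x ^ (p.1 - p.2)

theorem choose_succ_mul_pow_sub (a k : ℕ) :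
    (a.choose (k + 1) : R) * x ^ (a - k) = x * ((a.choose (k + 1) : R) * x ^ (a - (k + 1))) := by
  rcases le_or_gt (k + 1) a with h | h
  · rw [show a - k = a - (k + 1) + 1 by omega, pow_succ]
    ring
  · simp [Nat.choose_eq_zero_of_lt h]

theorem fibPoly_add_two (n : ℕ) :
    fibPoly x y (n + 2) = x * fibPoly x y (n + 1) + y * fibPoly x y n := by
  have hx : x * fibPoly x y (n + 1) = x ^ (n + 2) +
      ∑ p ∈ antidiagonal n, (p.1.choose (p.2 + 1) : R) * y ^ (p.2 + 1) * x ^ (p.1 - p.2) := by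
    rw [fibPoly, Nat.sum_antidiagonal_succ', mul_add, mul_sum]
    congr 1
    · simp [pow_succ']
    · refine sum_congr rfl fun p _ => ?_
      rw [mul_right_comm _ (y ^ (p.2 + 1)) (x ^ (p.1 - p.2)), choose_succ_mul_pow_sub]
      ring
  have hy : y * fibPoly x y n =
      ∑ p ∈ antidiagonal n, (p.1.choose p.2 : R) * y ^ (p.2 + 1) * x ^ (p.1 - p.2) := by
    rw [fibPoly, mul_sum]
    exact sum_congr rfl fun p _ => by ring
  rw [hx, hy, fibPoly, Nat.sum_antidiagonal_succ, Nat.sum_antidiagonal_succ']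
  simp [Nat.choose_succ_succ, add_mul, sum_add_distrib]
  ring

theorem fibPoly_eq_sum_range (n : ℕ) :
    fibPoly x y n = ∑ k ∈ range (n / 2 + 1), ((n - k).choose k : R) * y ^ k * x ^ (n - 2 * k) := by
  calc fibPoly x y n
      = ∑ k ∈ range (n + 1), ((n - k).choose k : R) * y ^ k * x ^ (n - 2 * k) := by
        rw [fibPoly, Nat.antidiagonal_eq_map', sum_map]
        exact sum_congr rfl fun k _ => by rw [two_mul, ← Nat.sub_sub]; rfl
    _ = _ := by
        refine (sum_subset (range_subset_range.2 (by omega)) fun k _ hk => ?_).symm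
        simp [Nat.choose_eq_zero_of_lt (show n - k < k by simp at hk; omega)]

end FibPoly

section Tridiagonal

def tridiagonal {R : Type*} [Zero R] (a b : R) (n : ℕ) : Matrix (Fin n) (Fin n) R :=
  of fun i j => if (i : ℕ) = j then a else if (i : ℕ) + 1 = j ∨ (j : ℕ) + 1 = i then b else 0

@[simp]
theorem tridiagonal_submatrix_succ {R : Type*} [Zero R] (a b : R) (n : ℕ) :
    (tridiagonal a b (n + 1)).submatrix Fin.succ Fin.succ = tridiagonal a b n := by
  ext i j
  simp [tridiagonal]

theorem sum_tridiagonal_mul {R : Type*} [CommSemiring R] (a b : R) {n : ℕ} (f : ℤ → R)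
    (h₀ : f (-1) = 0) (hn : f n = 0) (k : Fin n) :
    ∑ m, tridiagonal a b n k m * f m = a * f k + b * (f (k - 1) + f (k + 1)) := by
  obtain ⟨k, hk⟩ := k
  have entry : ∀ m : ℕ, (if k = m then a else if k + 1 = m ∨ m + 1 = k then b else 0) * f m =
      (if m = k then a * f k else 0) + (if m = k + 1 then b * f (k + 1) else 0) +
        (if m + 1 = k then b * f (k - 1) else 0) := by
    intro m
    split_ifs <;> subst_vars <;> first | omega | simp
  simp only [tridiagonal, of_apply]
  rw [Fin.sum_univ_eq_sum_range (fun m => (if k = m then a else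
    if k + 1 = m ∨ m + 1 = k then b else 0) * f m) n]
  simp only [entry, sum_add_distrib, sum_ite_eq', mem_range, hk, if_true]
  have up : (if k + 1 < n then b * f (k + 1) else 0) = b * f (k + 1) := by
    split_ifs with h
    · rfl
    · rw [show (k : ℤ) + 1 = n by omega, hn, mul_zero]
  have down : ∑ m ∈ range n, (if m + 1 = k then b * f (k - 1) else 0) = b * f (k - 1) := by
    cases k with
    | zero => simp [h₀]
    | succ k => simp [show k < n by omega]
  rw [up, down]
  ring

variable {R : Type*} [CommRing R] (a b : R)

theorem det_tridiagonal_add_two (n : ℕ) :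
    (tridiagonal a b (n + 2)).det =
      a * (tridiagonal a b (n + 1)).det - b ^ 2 * (tridiagonal a b n).det := by
  have minor : ((tridiagonal a b (n + 2)).submatrix Fin.succ (Fin.succAbove 1)).det =
      b * (tridiagonal a b n).det := by
    have h : ((tridiagonal a b (n + 2)).submatrix Fin.succ (Fin.succAbove 1)).submatrix
        Fin.succ Fin.succ = tridiagonal a b n := by
      ext i j
      simp [tridiagonal]
    rw [det_succ_column_zero, Fin.sum_univ_succ, sum_eq_zero fun i _ => ?_, Fin.succAbove_zero, h]
    · simp [tridiagonal]
    · simp [tridiagonal]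
  rw [det_succ_row_zero, Fin.sum_univ_succ, Fin.sum_univ_succ, sum_eq_zero fun j _ => ?_,
    Fin.succ_zero_eq_one, minor, Fin.succAbove_zero, tridiagonal_submatrix_succ]
  · simp [tridiagonal]
    ring
  · simp [tridiagonal]

theorem det_tridiagonal (n : ℕ) : (tridiagonal a b n).det = fibPoly a (-b ^ 2) n := by
  induction n using Nat.twoStepInduction with
  | zero => simp [fibPoly]
  | one => simp [fibPoly, tridiagonal, Nat.sum_antidiagonal_succ]
  | more n ih₀ ih₁ =>
    rw [det_tridiagonal_add_two, ih₀, ih₁, fibPoly_add_two]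
    ring

end Tridiagonal

section MotzkinMatrix

variable (ω : ℚ) (n : ℕ)

def motzkinMatrix : Matrix (Fin n) (Fin n) ℚ :=
  of fun i k => motzkinM ω i k

theorem det_motzkinMatrix : (motzkinMatrix ω n).det = 1 := by
  rw [det_of_isLowerTriangular (motzkinMatrix ω n) fun i j hij =>
    motzkinM.of_lt ω (by simpa using hij)]
  simp [motzkinMatrix, motzkinM.self]

theorem tridiagonal_mul_motzkinMatrix_transpose (α β : ℚ) :
    tridiagonal (α + β * ω) β n * (motzkinMatrix ω n)ᵀ =
      of fun k j : Fin n => α * motzkinM ω j k + β * motzkinM ω (j + 1) k := by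
  ext k j
  rw [mul_apply]
  simp only [transpose_apply, motzkinMatrix, of_apply]
  rw [sum_tridiagonal_mul _ _ (motzkinM ω j) (motzkinM.of_neg ω j (by norm_num))
    (motzkinM.of_lt ω (by exact_mod_cast j.isLt)), motzkinM.succ_of_nonneg ω j (by positivity)]
  ring

theorem motzkinMatrix_mul_tridiagonal_mul_transpose (α β : ℚ) :
    motzkinMatrix ω n * tridiagonal (α + β * ω) β n * (motzkinMatrix ω n)ᵀ =
      of fun i j : Fin n => α * motzkinM ω (i + j) 0 + β * motzkinM ω (i + j + 1) 0 := by
  ext i j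
  rw [Matrix.mul_assoc, tridiagonal_mul_motzkinMatrix_transpose, mul_apply, of_apply,
    motzkinM.add_zero_eq_sum_range ω i j i.isLt, add_assoc,
    motzkinM.add_zero_eq_sum_range ω i (j + 1) i.isLt, mul_sum, mul_sum, ← sum_add_distrib]
  simp only [motzkinMatrix, of_apply]
  rw [Fin.sum_univ_eq_sum_range (fun k => motzkinM ω i k *
    (α * motzkinM ω j k + β * motzkinM ω (j + 1) k)) n]
  exact sum_congr rfl fun k _ => by ring

end MotzkinMatrix

theorem motzkin_shifted_hankel_det (ω α β : ℚ) (n : ℕ) :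
    Matrix.det (Matrix.of fun i j : Fin n =>
        α * motzkinM ω (i.val + j.val) 0 + β * motzkinM ω (i.val + j.val + 1) 0) =
      ∑ k ∈ Finset.range (n/2 + 1),
        ((n-k).choose k : ℚ) * (-1) ^ k * β ^ (2*k) * (α + β * ω) ^ (n - 2*k) := by
  rw [← motzkinMatrix_mul_tridiagonal_mul_transpose, det_mul, det_mul, det_transpose,
    det_motzkinMatrix, one_mul, mul_one, det_tridiagonal, fibPoly_eq_sum_range]
  exact sum_congr rfl fun k _ => by rw [neg_pow, pow_mul]; ring
end

section
/- For ω=1, the generating function of compressed Schröder paths bounded strictly below height k equals the ratio of Delannoy polynomials at negative argument: Σ_{n≥0} S_{n;1}^{(k)} t^n = d_{k−1}(−t)/d_k(−t). -/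
open scoped BigOperators

/-- Count of Schröder paths from (0,0) to (n,j): steps (1,1), (1,-1) and (2,0),
staying weakly above the x-axis and strictly below the line y = k. -/
def schroederB (k : ℕ) : ℕ → ℤ → ℚ
  | 0, j => if j = 0 ∧ 0 < (k:ℤ) then 1 else 0
  | 1, j => if j < 0 ∨ (k:ℤ) ≤ j then 0 else
      schroederB k 0 (j-1) + schroederB k 0 (j+1)
  | n+2, j => if j < 0 ∨ (k:ℤ) ≤ j then 0 else
      schroederB k (n+1) (j-1) + schroederB k (n+1) (j+1) + schroederB k n j

/-- The Delannoy polynomial (ω = 1) evaluated at −t, as a power series: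
d_k(−t) = Σ_{l=0}^{k} C(k−l,l) (−1)^l t^l (1−t)^{k−2l}. -/
noncomputable def delannoyNeg (k : ℕ) : PowerSeries ℚ :=
  ∑ l ∈ Finset.range (k+1),
    PowerSeries.C (R := ℚ) (((k - l).choose l : ℚ) * (-1) ^ l) * PowerSeries.X ^ l *
      (1 - PowerSeries.X) ^ (k - 2*l)

/-!
Let `G_j` be the generating function of the bounded paths ending at height `j`, with `t` marking
down- and flat steps. Splitting off the last step gives `G_{j-1} = (1 - t) G_j - t G_{j+1}` for
`0 < j < k`, with `G_k = 0`, and `(1 - t) G_0 - t G_1 = 1` at the bottom. The first relation is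
the three-term recurrence of `d_m(-t)`, so `G_{k-1-m} = d_m(-t) G_{k-1}`; the bottom relation
then reads `d_k(-t) G_{k-1} = 1`, whence `G_0 = d_{k-1}(-t) / d_k(-t)`.
-/

open PowerSeries

namespace schroederB

variable {k : ℕ}

theorem eq_zero_of_neg_or_le (m : ℕ) {j : ℤ} (hj : j < 0 ∨ (k : ℤ) ≤ j) :
    schroederB k m j = 0 := by
  rcases m with _ | _ | m <;> simp only [schroederB] <;> grind

theorem eq_zero_of_lt (m : ℕ) {j : ℤ} (hj : (m : ℤ) < j) : schroederB k m j = 0 := by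
  fun_induction schroederB k m j <;> grind

theorem add_two (n : ℕ) {j : ℤ} (h0 : 0 ≤ j) (hk : j < k) :
    schroederB k (n + 2) j =
      schroederB k (n + 1) (j - 1) + schroederB k (n + 1) (j + 1) + schroederB k n j := by
  rw [schroederB, if_neg (by omega)]

theorem self_eq_one {j : ℕ} (hj : j < k) : schroederB k j j = 1 := by
  induction j using Nat.twoStepInduction with
  | zero => simp [schroederB]; omega
  | one => simp [schroederB, Nat.not_le.mpr hj]; omega
  | more j _ ih =>
    rw [add_two j (by omega) (by omega), eq_zero_of_lt (j + 1) (j := (j + 2 : ℕ) + 1) (by omega),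
      eq_zero_of_lt j (j := (j + 2 : ℕ)) (by omega),
      show ((j + 2 : ℕ) : ℤ) - 1 = (j + 1 : ℕ) by push_cast; ring, ih (by omega)]
    ring

end schroederB

noncomputable def schroederGF (k j : ℕ) : PowerSeries ℚ :=
  mk fun n => schroederB k (2 * n + j) j

section schroederGF

variable {k : ℕ}

theorem schroederGF_self : schroederGF k k = 0 := by
  ext n
  exact schroederB.eq_zero_of_neg_or_le _ (Or.inr le_rfl)

theorem schroederGF_zero (hk : 0 < k) :
    schroederGF k 0 = 1 + X * schroederGF k 1 + X * schroederGF k 0 := by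
  ext (_ | n)
  · simpa [schroederGF] using schroederB.self_eq_one hk
  · simp only [schroederGF, map_add, coeff_succ_X_mul, coeff_mk, coeff_one, Nat.cast_zero,
      Nat.cast_one]
    rw [show 2 * (n + 1) + 0 = 2 * n + 2 by ring, schroederB.add_two _ le_rfl (by omega),
      schroederB.eq_zero_of_neg_or_le _ (by omega)]
    simp

theorem schroederGF_succ {j : ℕ} (hj : j + 1 < k) :
    schroederGF k (j + 1) =
      schroederGF k j + X * schroederGF k (j + 2) + X * schroederGF k (j + 1) := by
  ext (_ | n)
  · have h₁ := schroederB.self_eq_one hj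
    have h₀ := schroederB.self_eq_one (Nat.lt_of_succ_lt hj)
    push_cast at h₁
    simp [schroederGF, h₀, h₁]
  · simp only [schroederGF, map_add, coeff_succ_X_mul, coeff_mk]
    rw [show 2 * (n + 1) + (j + 1) = 2 * n + j + 1 + 2 by ring,
      schroederB.add_two _ (by omega) (by omega)]
    push_cast
    ring_nf

end schroederGF

noncomputable def delannoyNegTerm (a l : ℕ) : PowerSeries ℚ :=
  C (((a - l).choose l : ℚ) * (-1) ^ l) * X ^ l * (1 - X) ^ (a - 2 * l)

theorem delannoyNegTerm_zero (a : ℕ) : delannoyNegTerm a 0 = (1 - X) ^ a := by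
  simp [delannoyNegTerm]

theorem delannoyNegTerm_of_lt {a l : ℕ} (h : a < l) : delannoyNegTerm a l = 0 := by
  simp [delannoyNegTerm, Nat.choose_eq_zero_of_lt (by omega : a - l < l)]

theorem delannoyNegTerm_add_two_succ (m l : ℕ) :
    delannoyNegTerm (m + 2) (l + 1) =
      (1 - X) * delannoyNegTerm (m + 1) (l + 1) - X * delannoyNegTerm m l := by
  have pascal : (m + 2 - (l + 1)).choose (l + 1) = (m - l).choose (l + 1) + (m - l).choose l := by
    rcases le_or_gt l m with h | h
    · rw [show m + 2 - (l + 1) = m - l + 1 by omega, Nat.choose_succ_succ', add_comm]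
    · rw [show m + 2 - (l + 1) = 0 by omega, show m - l = 0 by omega,
        Nat.choose_eq_zero_of_lt (by omega : 0 < l + 1), Nat.choose_eq_zero_of_lt h.pos]
  simp only [delannoyNegTerm, pascal, show m + 2 - 2 * (l + 1) = m - 2 * l by omega,
    show m + 1 - (l + 1) = m - l by omega]
  rcases le_or_gt (2 * l + 1) m with h | h
  · rw [show m - 2 * l = m + 1 - 2 * (l + 1) + 1 by omega]
    push_cast
    simp only [map_add, map_mul, map_neg, map_one, map_pow]
    ring
  · rw [Nat.choose_eq_zero_of_lt (by omega : m - l < l + 1)]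
    push_cast
    simp only [map_add, map_mul, map_zero, map_neg, map_one, map_pow]
    ring

theorem delannoyNeg_eq_sum_range_add_one (a : ℕ) :
    delannoyNeg a = ∑ l ∈ Finset.range (a + 1), delannoyNegTerm a l :=
  rfl

theorem delannoyNeg_eq_sum_range_add_two (a : ℕ) :
    delannoyNeg a = ∑ l ∈ Finset.range (a + 2), delannoyNegTerm a l := by
  rw [Finset.sum_range_succ, delannoyNegTerm_of_lt (by omega), add_zero,
    delannoyNeg_eq_sum_range_add_one]

theorem delannoyNeg_zero : delannoyNeg 0 = 1 := by
  simp [delannoyNeg]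

theorem delannoyNeg_one : delannoyNeg 1 = 1 - X := by
  simp [delannoyNeg, Finset.sum_range_succ]

theorem delannoyNeg_add_two (m : ℕ) :
    delannoyNeg (m + 2) = (1 - X) * delannoyNeg (m + 1) - X * delannoyNeg m := by
  rw [delannoyNeg_eq_sum_range_add_one, Finset.sum_range_succ', delannoyNeg_eq_sum_range_add_two,
    Finset.sum_range_succ' (delannoyNegTerm (m + 1)), delannoyNeg_eq_sum_range_add_two]
  simp only [delannoyNegTerm_add_two_succ, Finset.sum_sub_distrib, ← Finset.mul_sum,
    delannoyNegTerm_zero]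
  ring

/-- `delannoyNegPred m` is `d_{m-1}(-t)`, with `d_{-1} = 0` so that the three-term recurrence
holds from the start. -/
noncomputable def delannoyNegPred : ℕ → PowerSeries ℚ
  | 0 => 0
  | m + 1 => delannoyNeg m

theorem delannoyNegPred_add_two (m : ℕ) :
    delannoyNegPred (m + 2) = (1 - X) * delannoyNegPred (m + 1) - X * delannoyNegPred m := by
  cases m with
  | zero => simp [delannoyNegPred, delannoyNeg_zero, delannoyNeg_one]
  | succ m => exact delannoyNeg_add_two m

theorem schroederGF_sub_eq_delannoyNegPred_mul (K m : ℕ) (hm : m ≤ K + 1) :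
    schroederGF (K + 1) (K + 1 - m) = delannoyNegPred m * schroederGF (K + 1) K := by
  induction m using Nat.twoStepInduction with
  | zero => simp [delannoyNegPred, schroederGF_self]
  | one => simp [delannoyNegPred, delannoyNeg_zero]
  | more m ih₀ ih₁ =>
    have h := schroederGF_succ (k := K + 1) (j := K - m - 1) (by omega)
    rw [show K - m - 1 + 1 = K + 1 - (m + 1) by omega, show K - m - 1 + 2 = K + 1 - m by omega,
      ih₀ (by omega), ih₁ (by omega)] at h
    rw [show K + 1 - (m + 2) = K - m - 1 by omega, delannoyNegPred_add_two]
    linear_combination -h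

theorem delannoyNeg_mul_schroederGF (K : ℕ) :
    delannoyNeg (K + 1) * schroederGF (K + 1) K = 1 := by
  have h₀ := schroederGF_sub_eq_delannoyNegPred_mul K (K + 1) le_rfl
  have h₁ := schroederGF_sub_eq_delannoyNegPred_mul K K (by omega)
  rw [Nat.sub_self] at h₀
  rw [Nat.add_sub_cancel_left] at h₁
  have hrec := delannoyNegPred_add_two K
  simp only [delannoyNegPred.eq_2] at h₀ hrec
  linear_combination schroederGF (K + 1) K * hrec - (1 - X) * h₀ + X * h₁ +
    schroederGF_zero K.succ_pos

theorem bounded_schroeder_gf (k : ℕ) (hk : 1 ≤ k) :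
    (PowerSeries.mk fun n => schroederB k (2*n) 0) * delannoyNeg k =
      delannoyNeg (k-1) := by
  obtain ⟨K, rfl⟩ := Nat.exists_eq_add_of_le' hk
  have hG : (mk fun n => schroederB (K + 1) (2 * n) 0) = schroederGF (K + 1) 0 := by
    ext n; simp [schroederGF]
  rw [hG, Nat.add_sub_cancel, ← Nat.sub_self (K + 1),
    schroederGF_sub_eq_delannoyNegPred_mul K (K + 1) le_rfl, delannoyNegPred]
  linear_combination delannoyNeg K * delannoyNeg_mul_schroederGF K
end
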